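/- arXiv:2601.20298 — 3 statements merged into one kernel-verified Lean document; each statement's English description precedes it below -/
import Mathlib

section
/- Let n, h ∈ ℕ with h ≥ 1, let X, X_a, X_b ⊆ ℝⁿ be sets, let B : (ℝⁿ)^{h+1} → ℝ be a function, and let η, β, γ, δ ∈ ℝ with 0 ≤ η < β, γ ≥ 0, δ ≥ 0, λ ∈ (0,1), and γ·δ ≤ (1−λ)·β. Let x : ℕ → (ℝⁿ)^{h+1} be a sequence of state histories such that (i) B(x 0) ≤ η, (ii) for every k ∈ ℕ, if B(x k) < β then B(x (k+1)) ≤ λ·B(x k) + γ·δ, and (iii) B(s) ≥ β for every tuple s ∈ (ℝⁿ)^{h+1} whose first component lies in X_b and whose remaining h components lie in X \ X_b. Then for every k ∈ ℕ one has B(x k) < β, and consequently the history x k never lies in X_b × (X \ X_b)^h, i.e., it is never the case that the first component of x k is in X_b while its other h components are in X \ X_b. -/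
/-- **Robust safety from a Krasovskii barrier certificate.**
If `B` is bounded by `η < β` on the initial history, satisfies the decrease
condition `B(x(k+1)) ≤ λ·B(x k) + γ·δ` whenever `B(x k) < β`, and is at least
`β` on every history whose first component is unsafe while the remaining `h`
components are safe, and if `γ·δ ≤ (1-λ)·β`, then `B(x k) < β` for all `k`
and the history never lies in `X_b × (X \ X_b)^h`. -/
theorem stmt0
    (n h : ℕ) (hh : 1 ≤ h)
    (X Xa Xb : Set (Fin n → ℝ))
    (B : (Fin (h + 1) → (Fin n → ℝ)) → ℝ)
    (η β γ δ lam : ℝ)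
    (hη0 : 0 ≤ η) (hηβ : η < β) (hγ : 0 ≤ γ) (hδ : 0 ≤ δ)
    (hlam0 : 0 < lam) (hlam1 : lam < 1)
    (hγδ : γ * δ ≤ (1 - lam) * β)
    (x : ℕ → (Fin (h + 1) → (Fin n → ℝ)))
    (hinit : B (x 0) ≤ η)
    (hdec : ∀ k : ℕ, B (x k) < β → B (x (k + 1)) ≤ lam * B (x k) + γ * δ)
    (hunsafe : ∀ s : Fin (h + 1) → (Fin n → ℝ),
      s 0 ∈ Xb → (∀ i : Fin (h + 1), i ≠ 0 → s i ∈ X \ Xb) → β ≤ B s) :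
    ∀ k : ℕ, B (x k) < β ∧
      ¬ (x k 0 ∈ Xb ∧ ∀ i : Fin (h + 1), i ≠ 0 → x k i ∈ X \ Xb) := by
  have key : ∀ k : ℕ, B (x k) < β := by
    intro k
    induction k with
    | zero => linarith
    | succ k ih =>
      have := hdec k ih
      nlinarith
  intro k
  refine ⟨key k, fun hmem => ?_⟩
  exact absurd (hunsafe (x k) hmem.1 hmem.2) (not_le.mpr (key k))
end

section
/- Let n, φ, T ∈ ℕ and δ ≥ 0. Let X₊ ∈ ℝ^{n×T}, Ξ₁, Ξ₂ ∈ ℝ^{φ×T}, C₁, C₂ ∈ ℝ^{n×φ}, and W ∈ ℝ^{n×T} be matrices such that X₊ = C₁Ξ₁ + C₂Ξ₂ + W and T·δ·I_n − W·Wᵀ is positive semidefinite. Define the symmetric matrix 𝓢 ∈ ℝ^{(n+2φ)×(n+2φ)} as the 3×3 block matrix with blocks 𝓢₁₁ = X₊X₊ᵀ − TδI_n, 𝓢₁₂ = −X₊Ξ₁ᵀ, 𝓢₁₃ = −X₊Ξ₂ᵀ, 𝓢₂₂ = Ξ₁Ξ₁ᵀ, 𝓢₂₃ = Ξ₁Ξ₂ᵀ,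 𝓢₃₃ = Ξ₂Ξ₂ᵀ (and symmetric transposed blocks below the diagonal), and let ℵ ∈ ℝ^{(n+2φ)×n} be the vertical stacking of I_n, C₁ᵀ, and C₂ᵀ. Then ℵᵀ·𝓢·ℵ = W·Wᵀ − TδI_n, and in particular ℵᵀ·𝓢·ℵ is negative semidefinite. -/
/-!
Expanding the quadratic form of `𝓢` at `ℵ = [I; C₁ᵀ; C₂ᵀ]` gives
`(Xp - C₁Ξ₁ - C₂Ξ₂)(Xp - C₁Ξ₁ - C₂Ξ₂)ᵀ - TδI`, and by the data equation the residual
`Xp - C₁Ξ₁ - C₂Ξ₂` is the disturbance `W`. The disturbance bound then says exactly that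
`-(ℵᵀ𝓢ℵ) = TδI - WWᵀ ⪰ 0`.
-/

open Matrix

section QuadraticForm

variable {R m p t : Type*} [CommRing R] [Fintype m] [DecidableEq m] [Fintype p] [Fintype t]

/-- The paper's `𝓢`, with a general `D` in place of `TδI`. -/
def dataMatrix (X : Matrix m t R) (Ξ₁ Ξ₂ : Matrix p t R) (D : Matrix m m R) :
    Matrix (m ⊕ (p ⊕ p)) (m ⊕ (p ⊕ p)) R :=
  fromBlocks (X * Xᵀ - D) (fromCols (-(X * Ξ₁ᵀ)) (-(X * Ξ₂ᵀ)))
    (fromRows (-(Ξ₁ * Xᵀ)) (-(Ξ₂ * Xᵀ)))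
    (fromBlocks (Ξ₁ * Ξ₁ᵀ) (Ξ₁ * Ξ₂ᵀ) (Ξ₂ * Ξ₁ᵀ) (Ξ₂ * Ξ₂ᵀ))

def stackedSystemMatrix (C₁ C₂ : Matrix m p R) : Matrix (m ⊕ (p ⊕ p)) m R :=
  fromRows 1 (fromRows C₁ᵀ C₂ᵀ)

theorem stackedSystemMatrix_transpose_mul_dataMatrix_mul
    (X : Matrix m t R) (Ξ₁ Ξ₂ : Matrix p t R) (C₁ C₂ : Matrix m p R) (D : Matrix m m R) :
    (stackedSystemMatrix C₁ C₂)ᵀ * dataMatrix X Ξ₁ Ξ₂ D * stackedSystemMatrix C₁ C₂ =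
      (X - C₁ * Ξ₁ - C₂ * Ξ₂) * (X - C₁ * Ξ₁ - C₂ * Ξ₂)ᵀ - D := by
  simp only [stackedSystemMatrix, dataMatrix, transpose_fromRows, transpose_one,
    transpose_transpose, fromCols_mul_fromBlocks, fromCols_mul_fromRows, Matrix.add_mul,
    Matrix.one_mul, Matrix.mul_one, transpose_sub, transpose_mul, Matrix.mul_sub, Matrix.sub_mul,
    Matrix.mul_neg, Matrix.neg_mul, Matrix.mul_assoc]
  abel

end QuadraticForm

theorem stmt10_general
    (n φ T : ℕ) (δ : ℝ)
    (Xp : Matrix (Fin n) (Fin T) ℝ)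
    (Ξ₁ Ξ₂ : Matrix (Fin φ) (Fin T) ℝ)
    (C₁ C₂ : Matrix (Fin n) (Fin φ) ℝ)
    (W : Matrix (Fin n) (Fin T) ℝ)
    (hdata : Xp = C₁ * Ξ₁ + C₂ * Ξ₂ + W)
    (hW : ((T : ℝ) • δ • (1 : Matrix (Fin n) (Fin n) ℝ) - W * Wᵀ).PosSemidef)
    (𝓢 : Matrix (Fin n ⊕ (Fin φ ⊕ Fin φ)) (Fin n ⊕ (Fin φ ⊕ Fin φ)) ℝ)
    (h𝓢 : 𝓢 = fromBlocks
      (Xp * Xpᵀ - (T : ℝ) • δ • (1 : Matrix (Fin n) (Fin n) ℝ))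
      (fromCols (-(Xp * Ξ₁ᵀ)) (-(Xp * Ξ₂ᵀ)))
      (fromRows (-(Ξ₁ * Xpᵀ)) (-(Ξ₂ * Xpᵀ)))
      (fromBlocks (Ξ₁ * Ξ₁ᵀ) (Ξ₁ * Ξ₂ᵀ) (Ξ₂ * Ξ₁ᵀ) (Ξ₂ * Ξ₂ᵀ)))
    (ℵ : Matrix (Fin n ⊕ (Fin φ ⊕ Fin φ)) (Fin n) ℝ)
    (hℵ : ℵ = fromRows (1 : Matrix (Fin n) (Fin n) ℝ) (fromRows C₁ᵀ C₂ᵀ)) :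
    ℵᵀ * 𝓢 * ℵ = W * Wᵀ - (T : ℝ) • δ • (1 : Matrix (Fin n) (Fin n) ℝ) ∧
    (-(ℵᵀ * 𝓢 * ℵ)).PosSemidef := by
  have hresidual : Xp - C₁ * Ξ₁ - C₂ * Ξ₂ = W := by rw [hdata]; abel
  have h𝓢' : 𝓢 = dataMatrix Xp Ξ₁ Ξ₂ ((T : ℝ) • δ • 1) := h𝓢
  have hℵ' : ℵ = stackedSystemMatrix C₁ C₂ := hℵ
  have hform : ℵᵀ * 𝓢 * ℵ = W * Wᵀ - (T : ℝ) • δ • (1 : Matrix (Fin n) (Fin n) ℝ) := by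
    rw [h𝓢', hℵ', stackedSystemMatrix_transpose_mul_dataMatrix_mul, hresidual]
  exact ⟨hform, by rwa [hform, neg_sub]⟩

/-- **Quadratic data-consistency constraint.**
If `Xp = C₁Ξ₁ + C₂Ξ₂ + W` with `TδI_n - WWᵀ ⪰ 0`, then for the 3×3 block data
matrix `𝓢` and `ℵ = [I_n; C₁ᵀ; C₂ᵀ]` one has `ℵᵀ𝓢ℵ = WWᵀ - TδI_n`, which is
negative semidefinite. -/
theorem stmt10
    (n φ T : ℕ) (δ : ℝ) (hδ : 0 ≤ δ)
    (Xp : Matrix (Fin n) (Fin T) ℝ)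
    (Ξ₁ Ξ₂ : Matrix (Fin φ) (Fin T) ℝ)
    (C₁ C₂ : Matrix (Fin n) (Fin φ) ℝ)
    (W : Matrix (Fin n) (Fin T) ℝ)
    (hdata : Xp = C₁ * Ξ₁ + C₂ * Ξ₂ + W)
    (hW : ((T : ℝ) • δ • (1 : Matrix (Fin n) (Fin n) ℝ) - W * Wᵀ).PosSemidef)
    (𝓢 : Matrix (Fin n ⊕ (Fin φ ⊕ Fin φ)) (Fin n ⊕ (Fin φ ⊕ Fin φ)) ℝ)
    (h𝓢 : 𝓢 = fromBlocks
      (Xp * Xpᵀ - (T : ℝ) • δ • (1 : Matrix (Fin n) (Fin n) ℝ))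
      (fromCols (-(Xp * Ξ₁ᵀ)) (-(Xp * Ξ₂ᵀ)))
      (fromRows (-(Ξ₁ * Xpᵀ)) (-(Ξ₂ * Xpᵀ)))
      (fromBlocks (Ξ₁ * Ξ₁ᵀ) (Ξ₁ * Ξ₂ᵀ) (Ξ₂ * Ξ₁ᵀ) (Ξ₂ * Ξ₂ᵀ)))
    (ℵ : Matrix (Fin n ⊕ (Fin φ ⊕ Fin φ)) (Fin n) ℝ)
    (hℵ : ℵ = fromRows (1 : Matrix (Fin n) (Fin n) ℝ) (fromRows C₁ᵀ C₂ᵀ)) :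
    ℵᵀ * 𝓢 * ℵ = W * Wᵀ - (T : ℝ) • δ • (1 : Matrix (Fin n) (Fin n) ℝ) ∧
    (-(ℵᵀ * 𝓢 * ℵ)).PosSemidef :=
  stmt10_general n φ T δ Xp Ξ₁ Ξ₂ C₁ C₂ W hdata hW 𝓢 h𝓢 ℵ hℵ
end

section
/- Let n ∈ ℕ, h ∈ ℕ with h ≥ 1, let P ∈ ℝ^{n×n} be a positive semidefinite symmetric matrix with operator norm ‖P‖, let J, Y ∈ ℝ^{n×n}, μ₁, μ₂ > 0, and κ, λ ∈ (0,1). Define the 2n×2n symmetric block matrix Λ with blocks Λ₁₁ = (1+μ₁)·JᵀPJ + λ(κ−1)·P, Λ₁₂ = JᵀPY, Λ₂₁ = YᵀPJ, Λ₂₂ = (1+μ₂)·YᵀPY − κλ^{h+1}·P. If Λ is negative semidefinite, then for all x, x_h, w ∈ ℝⁿ: (Jx + Yx_h + w)ᵀ P (Jx + Yx_h + w) + λ(κ−1)·xᵀPx − κλ^{h+1}·x_hᵀPx_h ≤ (1 + 1/μ₁ + 1/μ₂)·‖P‖·‖w‖². -/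
/-!
With `a = J x`, `b = Y x_h` and the symmetric form `⟨u, v⟩ = uᵀ P v`, expand
`⟨a + b + w, a + b + w⟩` and bound the two cross terms with `w` by Young's inequality,
`2⟨a, w⟩ ≤ μ₁⟨a, a⟩ + μ₁⁻¹⟨w, w⟩` and likewise for `b` with `μ₂`. What remains apart from
`(1 + 1/μ₁ + 1/μ₂)⟨w, w⟩` is exactly the quadratic form of `Λ` at `(x, x_h)`, which is
nonpositive; finally `⟨w, w⟩ ≤ ‖P‖ ‖w‖²` by Cauchy–Schwarz.
-/

open Matrix
open scoped Matrix.Norms.L2Operator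

namespace Matrix

variable {ι m n : Type*} [Fintype ι] [Fintype m] [Fintype n]

lemma IsSymm.dotProduct_mulVec_comm {R : Type*} [CommSemiring R] {P : Matrix ι ι R}
    (hP : P.IsSymm) (u v : ι → R) : u ⬝ᵥ P *ᵥ v = v ⬝ᵥ P *ᵥ u := by
  simpa [hP.eq] using dotProduct_transpose_mulVec P u v

lemma dotProduct_transpose_mul_mul_mulVec {R : Type*} [CommSemiring R] (A : Matrix ι m R)
    (P : Matrix ι n R) (B : Matrix n m R) (x y : m → R) :
    x ⬝ᵥ (Aᵀ * P * B) *ᵥ y = (A *ᵥ x) ⬝ᵥ P *ᵥ (B *ᵥ y) := by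
  rw [← mulVec_mulVec, ← mulVec_mulVec, dotProduct_mulVec, vecMul_transpose]

lemma sumElim_dotProduct_fromBlocks_mulVec_sumElim {R : Type*} [CommSemiring R]
    (A : Matrix m m R) (B : Matrix m n R) (C : Matrix n m R) (D : Matrix n n R)
    (x : m → R) (y : n → R) :
    Sum.elim x y ⬝ᵥ fromBlocks A B C D *ᵥ Sum.elim x y =
      x ⬝ᵥ A *ᵥ x + x ⬝ᵥ B *ᵥ y + (y ⬝ᵥ C *ᵥ x + y ⬝ᵥ D *ᵥ y) := by
  rw [fromBlocks_mulVec, sumElim_dotProduct_sumElim, Sum.elim_comp_inl, Sum.elim_comp_inr,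
    dotProduct_add, dotProduct_add]

lemma PosSemidef.two_mul_dotProduct_mulVec_le {P : Matrix ι ι ℝ} (hP : P.PosSemidef)
    {μ : ℝ} (hμ : 0 < μ) (u v : ι → ℝ) :
    2 * (u ⬝ᵥ P *ᵥ v) ≤ μ * (u ⬝ᵥ P *ᵥ u) + μ⁻¹ * (v ⬝ᵥ P *ᵥ v) := by
  have hsq : 0 ≤ (μ • u - v) ⬝ᵥ P *ᵥ (μ • u - v) := by
    simpa using hP.dotProduct_mulVec_nonneg (μ • u - v)
  have hsymm : v ⬝ᵥ P *ᵥ u = u ⬝ᵥ P *ᵥ v :=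
    (isHermitian_iff_isSymm.mp hP.isHermitian).dotProduct_mulVec_comm v u
  simp only [mulVec_sub, mulVec_smul, sub_dotProduct, dotProduct_sub, smul_dotProduct,
    dotProduct_smul, smul_eq_mul, hsymm] at hsq
  rw [← mul_le_mul_iff_of_pos_left hμ, mul_add, mul_inv_cancel_left₀ hμ.ne']
  linarith

lemma dotProduct_mulVec_le_l2_opNorm_mul_sq [DecidableEq ι] (A : Matrix ι ι ℝ) (v : ι → ℝ) :
    v ⬝ᵥ A *ᵥ v ≤ ‖A‖ * ‖(WithLp.equiv 2 (ι → ℝ)).symm v‖ ^ 2 := by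
  set v₂ := (WithLp.equiv 2 (ι → ℝ)).symm v
  have hinner : v ⬝ᵥ A *ᵥ v = inner ℝ v₂ ((WithLp.equiv 2 (ι → ℝ)).symm (A *ᵥ v)) := by
    simp [v₂, PiLp.inner_apply, dotProduct, mul_comm]
  calc v ⬝ᵥ A *ᵥ v ≤ ‖v₂‖ * ‖(WithLp.equiv 2 (ι → ℝ)).symm (A *ᵥ v)‖ :=
        hinner ▸ real_inner_le_norm _ _
    _ ≤ ‖v₂‖ * (‖A‖ * ‖v₂‖) := by gcongr; exact A.l2_opNorm_mulVec v₂
    _ = ‖A‖ * ‖v₂‖ ^ 2 := by ring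

end Matrix

theorem stmt11_general
    (n h : ℕ)
    (P : Matrix (Fin n) (Fin n) ℝ) (hP : P.PosSemidef)
    (J Y : Matrix (Fin n) (Fin n) ℝ)
    (μ₁ μ₂ κ lam : ℝ) (hμ₁ : 0 < μ₁) (hμ₂ : 0 < μ₂)
    (Λ : Matrix (Fin n ⊕ Fin n) (Fin n ⊕ Fin n) ℝ)
    (hΛ : Λ = fromBlocks
      ((1 + μ₁) • (Jᵀ * P * J) + (lam * (κ - 1)) • P)
      (Jᵀ * P * Y)
      (Yᵀ * P * J)
      ((1 + μ₂) • (Yᵀ * P * Y) - (κ * lam ^ (h + 1)) • P))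
    (hNSD : (-Λ).PosSemidef) :
    ∀ x xh w : Fin n → ℝ,
      (J *ᵥ x + Y *ᵥ xh + w) ⬝ᵥ (P *ᵥ (J *ᵥ x + Y *ᵥ xh + w))
          + lam * (κ - 1) * (x ⬝ᵥ (P *ᵥ x))
          - κ * lam ^ (h + 1) * (xh ⬝ᵥ (P *ᵥ xh)) ≤
        (1 + 1 / μ₁ + 1 / μ₂) * ‖P‖ * ‖(WithLp.equiv 2 (Fin n → ℝ)).symm w‖ ^ 2 := by
  intro x xh w
  have hPsymm : P.IsSymm := isHermitian_iff_isSymm.mp hP.isHermitian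
  set a := J *ᵥ x
  set b := Y *ᵥ xh
  have hΛ_nonpos : Sum.elim x xh ⬝ᵥ Λ *ᵥ Sum.elim x xh ≤ 0 := by
    have hneg := hNSD.dotProduct_mulVec_nonneg (Sum.elim x xh)
    rw [star_trivial, neg_mulVec, dotProduct_neg] at hneg
    linarith
  have hΛ_form : Sum.elim x xh ⬝ᵥ Λ *ᵥ Sum.elim x xh =
      (1 + μ₁) * (a ⬝ᵥ P *ᵥ a) + lam * (κ - 1) * (x ⬝ᵥ P *ᵥ x) + 2 * (a ⬝ᵥ P *ᵥ b)
        + (1 + μ₂) * (b ⬝ᵥ P *ᵥ b) - κ * lam ^ (h + 1) * (xh ⬝ᵥ P *ᵥ xh) := by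
    rw [hΛ, sumElim_dotProduct_fromBlocks_mulVec_sumElim]
    simp only [add_mulVec, sub_mulVec, smul_mulVec, dotProduct_add, dotProduct_sub,
      dotProduct_smul, smul_eq_mul, dotProduct_transpose_mul_mul_mulVec]
    rw [hPsymm.dotProduct_mulVec_comm b a]
    ring
  have hexpand : (a + b + w) ⬝ᵥ P *ᵥ (a + b + w) =
      a ⬝ᵥ P *ᵥ a + b ⬝ᵥ P *ᵥ b + w ⬝ᵥ P *ᵥ w
        + 2 * (a ⬝ᵥ P *ᵥ b) + 2 * (a ⬝ᵥ P *ᵥ w) + 2 * (b ⬝ᵥ P *ᵥ w) := by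
    simp only [mulVec_add, dotProduct_add, add_dotProduct]
    rw [hPsymm.dotProduct_mulVec_comm b a, hPsymm.dotProduct_mulVec_comm w a,
      hPsymm.dotProduct_mulVec_comm w b]
    ring
  have hyoung₁ := hP.two_mul_dotProduct_mulVec_le hμ₁ a w
  have hyoung₂ := hP.two_mul_dotProduct_mulVec_le hμ₂ b w
  calc _ ≤ (1 + 1 / μ₁ + 1 / μ₂) * (w ⬝ᵥ P *ᵥ w) := by
        rw [hexpand, one_div, one_div]
        linarith
    _ ≤ _ := by
        rw [mul_assoc]
        gcongr
        exact dotProduct_mulVec_le_l2_opNorm_mul_sq P w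

/-- **Quadratic decrease bound from the block matrix condition.**
If the block matrix `Λ` built from `J`, `Y`, `P`, `μ₁`, `μ₂`, `κ`, `λ` is
negative semidefinite, then the decrease condition
`(Jx + Yx_h + w)ᵀP(Jx + Yx_h + w) + λ(κ-1)xᵀPx - κλ^{h+1}x_hᵀPx_h
  ≤ (1 + 1/μ₁ + 1/μ₂)·‖P‖·‖w‖²` holds for all `x, x_h, w`. -/
theorem stmt11
    (n h : ℕ) (hh : 1 ≤ h)
    (P : Matrix (Fin n) (Fin n) ℝ) (hP : P.PosSemidef)
    (J Y : Matrix (Fin n) (Fin n) ℝ)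
    (μ₁ μ₂ κ lam : ℝ) (hμ₁ : 0 < μ₁) (hμ₂ : 0 < μ₂)
    (hκ0 : 0 < κ) (hκ1 : κ < 1) (hlam0 : 0 < lam) (hlam1 : lam < 1)
    (Λ : Matrix (Fin n ⊕ Fin n) (Fin n ⊕ Fin n) ℝ)
    (hΛ : Λ = fromBlocks
      ((1 + μ₁) • (Jᵀ * P * J) + (lam * (κ - 1)) • P)
      (Jᵀ * P * Y)
      (Yᵀ * P * J)
      ((1 + μ₂) • (Yᵀ * P * Y) - (κ * lam ^ (h + 1)) • P))
    (hNSD : (-Λ).PosSemidef) :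
    ∀ x xh w : Fin n → ℝ,
      (J *ᵥ x + Y *ᵥ xh + w) ⬝ᵥ (P *ᵥ (J *ᵥ x + Y *ᵥ xh + w))
          + lam * (κ - 1) * (x ⬝ᵥ (P *ᵥ x))
          - κ * lam ^ (h + 1) * (xh ⬝ᵥ (P *ᵥ xh)) ≤
        (1 + 1 / μ₁ + 1 / μ₂) * ‖P‖ * ‖(WithLp.equiv 2 (Fin n → ℝ)).symm w‖ ^ 2 :=
  stmt11_general n h P hP J Y μ₁ μ₂ κ lam hμ₁ hμ₂ Λ hΛ hNSD
end
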